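/- Let n ≥ 1, N ≥ 1, ε > 0 and Δ ≥ 0. For b : Fin N → ℝ^n, let μ_b be the product measure on (ℝ^n)^N whose i-th factor is the n-dimensional Laplacian measure centered at b_i (density v ↦ c_n^ε·exp(−ε‖v − b_i‖) with respect to Lebesgue measure on ℝ^n). Then the μ_b-measure of the set {(v_1,…,v_N) ∈ (ℝ^n)^N : min over permutations τ of {1,…,N} of Σ_{i=1}^{N} ‖b_i − v_{τ(i)}‖ ≤ N·Δ} is at least 1 − exp(−ε·N·Δ) · e_{n−1}(ε·N·Δ) · Σ_{k=0}^{N−1} ((ε·N·Δ)^n/n!)^k. (Since min_τ Σ_i ‖b_i − v_{τ(i)}‖ = N·E_{‖·‖}(b, v) for size-N bags, this lower-bounds the probability that Algorithm 1 outputs a bag within Earth Mover's distance Δ of the input bag b.) -/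

import Mathlib

/-!
Under the Laplacian measure centred at `x`, the radius `‖v - x‖` follows the Erlang law
`Γ(n, ε)`: in polar coordinates the density `c · e^{-ε‖w‖}` becomes proportional to
`r^{n-1} e^{-εr}`, whose tail is `e^{-εR} e_{n-1}(εR)`. Shapes of independent Erlang variables add
(a Beta integral), so `∑ i, ‖v i - b i‖` follows `Γ(nN, ε)` under the product measure and exceeds
`NΔ` with probability `e^{-x} e_{nN-1}(x)`, `x = εNΔ`. Cutting `e_{nN-1}` into `N` blocks of `n`
terms and using `i! (n!)^k ≤ (nk + i)!` bounds this by `e^{-x} e_{n-1}(x) ∑_{k<N} (x^n/n!)^k`.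
The identity permutation shows that `∑ i, ‖b i - v i‖ ≤ NΔ` implies the Earth Mover condition.
-/

open MeasureTheory Real Finset

/-- The normalising constant of the `n`-dimensional Laplacian density with parameter `ε`. -/
noncomputable def lapConst (n : ℕ) (ε : ℝ) : ℝ :=
  ε ^ n * Real.Gamma ((n : ℝ) / 2 + 1) / (Real.Gamma n * n * Real.pi ^ ((n : ℝ) / 2))

/-- The `n`-dimensional Laplacian measure with parameter `ε` centered at `x ∈ ℝ^n`. -/
noncomputable def lapMeasure (n : ℕ) (ε : ℝ) (x : EuclideanSpace ℝ (Fin n)) :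
    Measure (EuclideanSpace ℝ (Fin n)) :=
  volume.withDensity fun v => ENNReal.ofReal (lapConst n ε * Real.exp (-ε * ‖v - x‖))

open Set Metric Filter Topology
open scoped ENNReal Nat

noncomputable def erlangTail (ε : ℝ) (n : ℕ) (R : ℝ) : ℝ :=
  exp (-(ε * R)) * ∑ j ∈ range n, (ε * R) ^ j / j !

noncomputable def erlangDensity (ε : ℝ) (n : ℕ) (r : ℝ) : ℝ :=
  ε ^ n / (n - 1)! * r ^ (n - 1) * exp (-(ε * r))

theorem hasDerivAt_sum_range_pow_div_factorial (m : ℕ) (x : ℝ) :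
    HasDerivAt (fun x : ℝ => ∑ j ∈ range (m + 1), x ^ j / j !)
      (∑ j ∈ range m, x ^ j / j !) x := by
  induction m with
  | zero => simpa using hasDerivAt_const x (1 : ℝ)
  | succ m ih =>
    simp_rw [sum_range_succ _ (m + 1)]
    refine ih.add ((hasDerivAt_pow (m + 1) x).div_const _) |>.congr_deriv ?_
    rw [sum_range_succ, Nat.factorial_succ]
    push_cast
    field_simp

theorem integral_pow_mul_sub_pow (t : ℝ) (a b : ℕ) :
    ∫ s in (0 : ℝ)..t, s ^ a * (t - s) ^ b = t ^ (a + b + 1) * (a ! * b !) / (a + b + 1)! := by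
  induction b generalizing a with
  | zero =>
    simp only [pow_zero, mul_one, integral_pow, Nat.factorial_zero, add_zero,
      Nat.factorial_succ]
    push_cast
    field_simp
    ring
  | succ b ih =>
    have hu : ∀ s ∈ uIcc 0 t, HasDerivAt (fun s => (t - s) ^ (b + 1))
        (-((b + 1) * (t - s) ^ b)) s := fun s _ => by
      refine ((hasDerivAt_pow (b + 1) (t - s)).comp s
        ((hasDerivAt_id s).const_sub t)).congr_deriv ?_
      push_cast; ring
    have hv : ∀ s ∈ uIcc 0 t, HasDerivAt (fun s => s ^ (a + 1) / ((a : ℝ) + 1)) (s ^ a) s :=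
      fun s _ => by
        refine ((hasDerivAt_pow (a + 1) s).div_const ((a : ℝ) + 1)).congr_deriv ?_
        push_cast; field_simp
    have parts := intervalIntegral.integral_mul_deriv_eq_deriv_mul hu hv
      (by apply Continuous.intervalIntegrable; fun_prop)
      (by apply Continuous.intervalIntegrable; fun_prop)
    simp only [sub_self, zero_pow (Nat.succ_ne_zero _), zero_mul, mul_zero, zero_div, sub_zero,
      zero_sub] at parts
    calc ∫ s in (0 : ℝ)..t, s ^ a * (t - s) ^ (b + 1)
        = ∫ s in (0 : ℝ)..t, (t - s) ^ (b + 1) * s ^ a := by simp only [mul_comm]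
      _ = (b + 1) / (a + 1) * ∫ s in (0 : ℝ)..t, s ^ (a + 1) * (t - s) ^ b := by
        rw [parts, ← intervalIntegral.integral_const_mul, ← intervalIntegral.integral_neg]
        congr 1; ext s; field_simp
      _ = _ := by
        rw [ih, show a + 1 + b + 1 = a + (b + 1) + 1 by ring, Nat.factorial_succ a,
          Nat.factorial_succ b]
        push_cast
        field_simp

theorem factorial_mul_factorial_pow_le_factorial (i n N : ℕ) : i ! * n ! ^ N ≤ (n * N + i)! := by
  induction N with
  | zero => simp
  | succ N ih =>
    calc i ! * n ! ^ (N + 1) = i ! * n ! ^ N * n ! := by ring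
      _ ≤ (n * N + i)! * n ! := Nat.mul_le_mul_right _ ih
      _ ≤ (n * N + i + n)! :=
        Nat.le_of_dvd (Nat.factorial_pos _) (Nat.factorial_mul_factorial_dvd_factorial_add _ _)
      _ = (n * (N + 1) + i)! := by ring_nf

theorem sum_range_pow_div_factorial_le {x : ℝ} (hx : 0 ≤ x) (n N : ℕ) :
    ∑ j ∈ range (n * N), x ^ j / j ! ≤
      (∑ i ∈ range n, x ^ i / i !) * ∑ k ∈ range N, (x ^ n / n !) ^ k := by
  induction N with
  | zero => simp
  | succ N ih =>
    rw [Nat.mul_succ, sum_range_add, sum_range_succ, mul_add, sum_mul _ _ ((x ^ n / n !) ^ N)]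
    refine add_le_add ih (sum_le_sum fun i _ => ?_)
    have hfact : (i ! * n ! ^ N : ℝ) ≤ (n * N + i)! := by
      exact_mod_cast factorial_mul_factorial_pow_le_factorial i n N
    rw [div_pow, div_mul_div_comm, ← pow_mul, ← pow_add, add_comm i]
    exact div_le_div_of_nonneg_left (by positivity) (by positivity) hfact

section Polar

variable {E : Type*} [NormedAddCommGroup E] [NormedSpace ℝ E] [MeasurableSpace E] [BorelSpace E]
  [FiniteDimensional ℝ E] [Nontrivial E] (μ : Measure E) [μ.IsAddHaarMeasure]

theorem lintegral_fun_norm_addHaar {f : ℝ → ℝ≥0∞} (hf : Measurable f) :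
    ∫⁻ x, f ‖x‖ ∂μ = Module.finrank ℝ E * μ (ball 0 1) *
      ∫⁻ y in Ioi (0 : ℝ), ENNReal.ofReal (y ^ (Module.finrank ℝ E - 1)) * f y :=
  calc ∫⁻ x, f ‖x‖ ∂μ = ∫⁻ x : ({(0 : E)}ᶜ : Set E), f ‖x.1‖ ∂μ.comap (↑) := by
        rw [lintegral_subtype_comap (measurableSet_singleton _).compl (f ‖·‖),
          restrict_compl_singleton]
    _ = ∫⁻ x, f x.2 ∂μ.toSphere.prod (.volumeIoiPow (Module.finrank ℝ E - 1)) := by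
        simpa using μ.measurePreserving_homeomorphUnitSphereProd.lintegral_comp_emb
          (Homeomorph.measurableEmbedding _) (f ∘ Subtype.val ∘ Prod.snd)
    _ = μ.toSphere univ * ∫⁻ y : Ioi (0 : ℝ), f y ∂.volumeIoiPow (Module.finrank ℝ E - 1) := by
        rw [mul_comm, ← lintegral_const,
          lintegral_prod (fun x : sphere (0 : E) 1 × Ioi (0 : ℝ) => f x.2) (by fun_prop)]
    _ = _ := by
        rw [μ.toSphere_apply_univ, Measure.volumeIoiPow,
          lintegral_withDensity_eq_lintegral_mul _ (by fun_prop)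
            (by fun_prop : Measurable fun y : Ioi (0 : ℝ) => f y)]
        exact congrArg _ (lintegral_subtype_comap measurableSet_Ioi
          fun y => ENNReal.ofReal (y ^ (Module.finrank ℝ E - 1)) * f y)

end Polar

theorem measure_pi_fin_succ {X : Type*} [MeasurableSpace X] {m : ℕ} (μ : Fin (m + 1) → Measure X)
    [∀ i, SigmaFinite (μ i)] {A : Set (Fin (m + 1) → X)} (hA : MeasurableSet A) :
    Measure.pi μ A = ∫⁻ y, Measure.pi (fun j => μ j.succ) {w | Fin.cons y w ∈ A} ∂μ 0 := by
  have hmp := (measurePreserving_piFinSuccAbove μ 0).symm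
  rw [← hmp.measure_preimage hA.nullMeasurableSet, Measure.prod_apply (hA.preimage hmp.measurable)]
  simp only [Fin.zero_succAbove, Set.preimage, MeasurableEquiv.piFinSuccAbove_symm_apply,
    Fin.insertNthEquiv, Equiv.coe_fn_mk, Fin.insertNth_zero', mem_ofPred_eq]

section Erlang

variable {ε : ℝ} {n : ℕ}

theorem erlangTail_zero (hn : n ≠ 0) : erlangTail ε n 0 = 1 := by
  obtain ⟨m, rfl⟩ := Nat.exists_eq_succ_of_ne_zero hn
  simp [erlangTail, sum_range_succ']

theorem erlangTail_nonneg (hε : 0 ≤ ε) {R : ℝ} (hR : 0 ≤ R) : 0 ≤ erlangTail ε n R := by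
  unfold erlangTail; positivity

theorem continuous_erlangTail : Continuous (erlangTail ε n) := by
  unfold erlangTail; fun_prop

theorem erlangDensity_nonneg (hε : 0 ≤ ε) {r : ℝ} (hr : 0 ≤ r) : 0 ≤ erlangDensity ε n r := by
  unfold erlangDensity; positivity

theorem erlangTail_add (M : ℕ) (R : ℝ) :
    erlangTail ε (n + M) R =
      erlangTail ε n R + exp (-(ε * R)) * ∑ j ∈ range M, (ε * R) ^ (n + j) / (n + j)! := by
  rw [erlangTail, erlangTail, sum_range_add, mul_add]

theorem hasDerivAt_erlangTail (hn : n ≠ 0) (s : ℝ) :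
    HasDerivAt (erlangTail ε n) (-erlangDensity ε n s) s := by
  obtain ⟨m, rfl⟩ := Nat.exists_eq_succ_of_ne_zero hn
  have hlin : HasDerivAt (fun s => ε * s) ε s := by simpa using (hasDerivAt_id s).const_mul ε
  have hexp := (hasDerivAt_exp _).comp s hlin.neg
  have hsum := (hasDerivAt_sum_range_pow_div_factorial m (ε * s)).comp s hlin
  refine (hexp.mul hsum).congr_deriv ?_
  simp only [Function.comp_def, Pi.neg_apply, erlangDensity, Nat.succ_sub_one, sum_range_succ,
    pow_succ]
  ring

theorem tendsto_erlangTail_atTop (hε : 0 < ε) : Tendsto (erlangTail ε n) atTop (𝓝 0) := by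
  have hlin : Tendsto (fun s => ε * s) atTop atTop := tendsto_id.const_mul_atTop hε
  have := tendsto_finsetSum (range n) fun j _ =>
    ((tendsto_pow_mul_exp_neg_atTop_nhds_zero j).comp hlin).div_const (j ! : ℝ)
  simp only [zero_div, sum_const_zero] at this
  refine this.congr fun s => ?_
  simp only [erlangTail, mul_sum, Function.comp_apply]
  exact sum_congr rfl fun j _ => by ring

theorem lintegral_Ioi_erlangDensity (hn : n ≠ 0) (hε : 0 < ε) {R : ℝ} (hR : 0 ≤ R) :
    ∫⁻ r in Ioi R, ENNReal.ofReal (erlangDensity ε n r) = ENNReal.ofReal (erlangTail ε n R) := by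
  have hderiv : ∀ s ∈ Ici R, HasDerivAt (-erlangTail ε n) (erlangDensity ε n s) s :=
    fun s _ => by simpa only [neg_neg] using (hasDerivAt_erlangTail hn s).neg
  have hpos : ∀ s ∈ Ioi R, 0 ≤ erlangDensity ε n s :=
    fun s hs => erlangDensity_nonneg hε.le (hR.trans hs.out.le)
  have hlim : Tendsto (-erlangTail ε n) atTop (𝓝 0) := by
    rw [← neg_zero]; exact (tendsto_erlangTail_atTop hε).neg
  rw [← ofReal_integral_eq_lintegral_ofReal (integrableOn_Ioi_deriv_of_nonneg' hderiv hpos hlim)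
    ((ae_restrict_iff' measurableSet_Ioi).2 (.of_forall hpos)),
    integral_Ioi_of_hasDerivAt_of_nonneg' hderiv hpos hlim, Pi.neg_apply, zero_sub, neg_neg]

theorem integral_erlangDensity_mul_erlangTail (hn : n ≠ 0) (M : ℕ) (t : ℝ) :
    ∫ r in (0 : ℝ)..t, erlangDensity ε n r * erlangTail ε M (t - r) =
      erlangTail ε (n + M) t - erlangTail ε n t := by
  have hexp : ∀ r, exp (-(ε * r)) * exp (-(ε * (t - r))) = exp (-(ε * t)) := fun r => by
    rw [← exp_add]; ring_nf
  have hterm : ∀ r, erlangDensity ε n r * erlangTail ε M (t - r) = ∑ j ∈ range M,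
      ε ^ n / (n - 1)! * exp (-(ε * t)) * (ε ^ j / j !) * (r ^ (n - 1) * (t - r) ^ j) := fun r => by
    simp only [erlangTail, erlangDensity, mul_sum]
    refine sum_congr rfl fun j _ => ?_
    rw [← hexp r, mul_pow]; ring
  simp_rw [hterm]
  rw [intervalIntegral.integral_finsetSum fun j _ =>
      (by fun_prop : Continuous _).intervalIntegrable _ _,
    erlangTail_add, add_sub_cancel_left, mul_sum]
  refine sum_congr rfl fun j _ => ?_
  rw [intervalIntegral.integral_const_mul, integral_pow_mul_sub_pow,
    show n - 1 + j + 1 = n + j by omega, mul_pow]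
  have : (n - 1 : ℕ)! ≠ 0 := Nat.factorial_ne_zero _
  field_simp
  ring

end Erlang

section Laplace

theorem natCast_mul_volume_ball_mul_lapConst {n : ℕ} (hn : n ≠ 0) (ε : ℝ) :
    n * volume.real (ball (0 : EuclideanSpace ℝ (Fin n)) 1) * lapConst n ε = ε ^ n / (n - 1)! := by
  have : Nonempty (Fin n) := ⟨⟨0, Nat.pos_of_ne_zero hn⟩⟩
  have hsqrt : √π ^ n = π ^ ((n : ℝ) / 2) := by
    rw [sqrt_eq_rpow, ← rpow_natCast, ← rpow_mul pi_pos.le, one_div_mul_eq_div]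
  have hGamma : Gamma n = (n - 1)! := by
    rw [← Gamma_nat_eq_factorial, Nat.cast_sub (Nat.one_le_iff_ne_zero.2 hn), Nat.cast_one,
      sub_add_cancel]
  have : 0 < Gamma ((n : ℝ) / 2 + 1) := Gamma_pos_of_pos (by positivity)
  have : 0 < π ^ ((n : ℝ) / 2) := by positivity
  have : (n : ℝ) ≠ 0 := Nat.cast_ne_zero.2 hn
  rw [measureReal_def, EuclideanSpace.volume_ball, ENNReal.ofReal_one, one_pow, one_mul,
    ENNReal.toReal_ofReal (by positivity), Fintype.card_fin, lapConst, hsqrt, hGamma]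
  field_simp

variable {n : ℕ} {ε : ℝ}

theorem lintegral_lapMeasure_comp_norm_sub (hn : n ≠ 0) (hε : 0 ≤ ε)
    (x : EuclideanSpace ℝ (Fin n)) {f : ℝ → ℝ≥0∞} (hf : Measurable f) :
    ∫⁻ v, f ‖v - x‖ ∂lapMeasure n ε x =
      ∫⁻ r in Ioi 0, ENNReal.ofReal (erlangDensity ε n r) * f r := by
  have : Nontrivial (EuclideanSpace ℝ (Fin n)) :=
    Module.nontrivial_of_finrank_pos (R := ℝ) (by simpa using Nat.pos_of_ne_zero hn)
  have hlapConst : 0 ≤ lapConst n ε := by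
    have : 0 < Gamma ((n : ℝ) / 2 + 1) := Gamma_pos_of_pos (by positivity)
    have : 0 < Gamma n := Gamma_pos_of_pos (by positivity)
    unfold lapConst; positivity
  rw [lapMeasure, lintegral_withDensity_eq_lintegral_mul _
      (by fun_prop : Measurable fun v => ENNReal.ofReal (lapConst n ε * exp (-ε * ‖v - x‖)))
      (by fun_prop : Measurable fun v => f ‖v - x‖)]
  simp only [Pi.mul_apply]
  rw [lintegral_sub_right_eq_self (fun w => ENNReal.ofReal (lapConst n ε * exp (-ε * ‖w‖)) * f ‖w‖),
    lintegral_fun_norm_addHaar _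
      (f := fun r => ENNReal.ofReal (lapConst n ε * exp (-ε * r)) * f r) (by fun_prop),
    finrank_euclideanSpace_fin,
    ← lintegral_const_mul _ (by fun_prop)]
  refine setLIntegral_congr_fun measurableSet_Ioi fun r hr => ?_
  have hr : 0 ≤ r := hr.out.le
  rw [← ofReal_measureReal measure_ball_lt_top.ne, ← ENNReal.ofReal_natCast,
    ← ENNReal.ofReal_mul (by positivity), ← mul_assoc, ← mul_assoc,
    ← ENNReal.ofReal_mul (by positivity), ← ENNReal.ofReal_mul (by positivity), erlangDensity,
    ← natCast_mul_volume_ball_mul_lapConst hn ε, neg_mul]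
  ring_nf

theorem isProbabilityMeasure_lapMeasure (hn : n ≠ 0) (hε : 0 < ε) (x : EuclideanSpace ℝ (Fin n)) :
    IsProbabilityMeasure (lapMeasure n ε x) := by
  constructor
  have := lintegral_lapMeasure_comp_norm_sub hn hε.le x (f := fun _ => 1) measurable_const
  simp only [mul_one, lintegral_one] at this
  rw [this, lintegral_Ioi_erlangDensity hn hε le_rfl, erlangTail_zero hn, ENNReal.ofReal_one]

/- With `r = ‖v - x‖`, the integrand is `P(r + S > t)` for `S ∼ Erlang(M, ε)`, so this is the
convolution identity `Erlang(n, ε) ∗ Erlang(M, ε) = Erlang(n + M, ε)`. -/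
theorem lintegral_lapMeasure_erlangTail (hn : n ≠ 0) (hε : 0 < ε) (x : EuclideanSpace ℝ (Fin n))
    (M : ℕ) {t : ℝ} (ht : 0 ≤ t) :
    ∫⁻ v, (if ‖v - x‖ ≤ t then ENNReal.ofReal (erlangTail ε M (t - ‖v - x‖)) else 1)
        ∂lapMeasure n ε x = ENNReal.ofReal (erlangTail ε (n + M) t) := by
  rw [lintegral_lapMeasure_comp_norm_sub hn hε.le x
      (f := fun r => if r ≤ t then ENNReal.ofReal (erlangTail ε M (t - r)) else 1)
      (Measurable.ite measurableSet_Iic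
        (continuous_erlangTail.comp (continuous_sub_left t)).measurable.ennreal_ofReal
        measurable_const),
    ← Ioc_union_Ioi_eq_Ioi ht, lintegral_union measurableSet_Ioi (Ioc_disjoint_Ioi le_rfl)]
  have hfar : ∫⁻ r in Ioi t, ENNReal.ofReal (erlangDensity ε n r) *
      (if r ≤ t then ENNReal.ofReal (erlangTail ε M (t - r)) else 1) =
        ENNReal.ofReal (erlangTail ε n t) := by
    rw [← lintegral_Ioi_erlangDensity hn hε ht]
    refine setLIntegral_congr_fun measurableSet_Ioi fun r hr => ?_
    rw [if_neg (not_le.2 hr), mul_one]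
  have hnear : ∫⁻ r in Ioc 0 t, ENNReal.ofReal (erlangDensity ε n r) *
      (if r ≤ t then ENNReal.ofReal (erlangTail ε M (t - r)) else 1) =
        ENNReal.ofReal (erlangTail ε (n + M) t - erlangTail ε n t) := by
    have hnonneg : ∀ r ∈ Ioc 0 t, 0 ≤ erlangDensity ε n r * erlangTail ε M (t - r) :=
      fun r hr => mul_nonneg (erlangDensity_nonneg hε.le hr.1.le)
        (erlangTail_nonneg hε.le (sub_nonneg.2 hr.2))
    rw [setLIntegral_congr_fun measurableSet_Ioc fun r hr => by
        rw [if_pos hr.2, ← ENNReal.ofReal_mul (erlangDensity_nonneg hε.le hr.1.le)],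
      ← ofReal_integral_eq_lintegral_ofReal
        (Continuous.integrableOn_Ioc (by unfold erlangDensity erlangTail; fun_prop))
        ((ae_restrict_iff' measurableSet_Ioc).2 (.of_forall hnonneg)),
      ← intervalIntegral.integral_of_le ht, integral_erlangDensity_mul_erlangTail hn]
  have hmono : erlangTail ε n t ≤ erlangTail ε (n + M) t := by
    rw [erlangTail_add]
    have hε' := hε.le
    exact le_add_of_nonneg_right (by positivity)
  rw [hnear, hfar, ← ENNReal.ofReal_add (sub_nonneg.2 hmono) (erlangTail_nonneg hε.le ht),
    sub_add_cancel]

theorem measure_pi_lapMeasure_lt_sum_norm_sub (hn : n ≠ 0) (hε : 0 < ε) {m : ℕ}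
    (c : Fin m → EuclideanSpace ℝ (Fin n)) {t : ℝ} (ht : 0 ≤ t) :
    Measure.pi (fun i => lapMeasure n ε (c i)) {v | t < ∑ i, ‖v i - c i‖} =
      ENNReal.ofReal (erlangTail ε (n * m) t) := by
  induction m generalizing t with
  | zero => simp [not_lt.2 ht, erlangTail]
  | succ m ih =>
    have := fun i => isProbabilityMeasure_lapMeasure hn hε (c i)
    rw [measure_pi_fin_succ _ (measurableSet_lt measurable_const (by fun_prop)),
      show n * (m + 1) = n + n * m by ring,
      ← lintegral_lapMeasure_erlangTail hn hε (c 0) (n * m) ht]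
    refine lintegral_congr fun y => ?_
    simp only [mem_ofPred_eq, Fin.sum_univ_succ, Fin.cons_zero, Fin.cons_succ,
      ← sub_lt_iff_lt_add']
    split_ifs with h
    · exact ih (c ∘ Fin.succ) (sub_nonneg.2 h)
    · convert measure_univ
      · exact eq_univ_of_forall fun w =>
          (sub_neg.2 (not_le.1 h)).trans_le (sum_nonneg fun i _ => norm_nonneg _)
      · infer_instance

end Laplace

theorem earth_mover_utility_bound_general (n N : ℕ) (hn : 1 ≤ n)
    (ε : ℝ) (hε : 0 < ε) (Δ : ℝ) (hΔ : 0 ≤ Δ)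
    (b : Fin N → EuclideanSpace ℝ (Fin n)) :
    ENNReal.ofReal
        (1 - Real.exp (-(ε * N * Δ)) *
            (∑ k ∈ Finset.range n, (ε * N * Δ) ^ k / (Nat.factorial k)) *
              ∑ k ∈ Finset.range N, ((ε * N * Δ) ^ n / (Nat.factorial n)) ^ k) ≤
      Measure.pi (fun i => lapMeasure n ε (b i))
        {v : Fin N → EuclideanSpace ℝ (Fin n) |
          (⨅ τ : Equiv.Perm (Fin N), ∑ i, ‖b i - v (τ i)‖) ≤ N * Δ} := by
  have hn₀ : n ≠ 0 := Nat.one_le_iff_ne_zero.1 hn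
  have := fun i => isProbabilityMeasure_lapMeasure hn₀ hε (b i)
  have hT : 0 ≤ (N : ℝ) * Δ := by positivity
  have hsub : {v : Fin N → EuclideanSpace ℝ (Fin n) | N * Δ < ∑ i, ‖v i - b i‖}ᶜ ⊆
      {v | (⨅ τ : Equiv.Perm (Fin N), ∑ i, ‖b i - v (τ i)‖) ≤ N * Δ} := fun v hv =>
    calc ⨅ τ : Equiv.Perm (Fin N), ∑ i, ‖b i - v (τ i)‖
        ≤ ∑ i, ‖b i - v (Equiv.refl _ i)‖ := ciInf_le (finite_range _).bddBelow _
      _ = ∑ i, ‖v i - b i‖ := by simp only [Equiv.refl_apply, norm_sub_rev]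
      _ ≤ N * Δ := not_lt.1 hv
  have htail : erlangTail ε (n * N) (N * Δ) ≤ exp (-(ε * N * Δ)) *
      (∑ k ∈ range n, (ε * N * Δ) ^ k / k !) * ∑ k ∈ range N, ((ε * N * Δ) ^ n / n !) ^ k := by
    rw [erlangTail, mul_assoc (exp _), ← mul_assoc ε]
    exact mul_le_mul_of_nonneg_left (sum_range_pow_div_factorial_le (by positivity) n N)
      (exp_pos _).le
  calc _ ≤ ENNReal.ofReal (1 - erlangTail ε (n * N) (N * Δ)) :=
        ENNReal.ofReal_le_ofReal (by linarith)
    _ = Measure.pi (fun i => lapMeasure n ε (b i)) {v | N * Δ < ∑ i, ‖v i - b i‖}ᶜ := by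
      rw [prob_compl_eq_one_sub (measurableSet_lt measurable_const (by fun_prop)),
        measure_pi_lapMeasure_lt_sum_norm_sub hn₀ hε b hT,
        ENNReal.ofReal_sub _ (erlangTail_nonneg hε.le hT), ENNReal.ofReal_one]
    _ ≤ _ := measure_mono hsub

/-- utility bound for the Earth Mover's privacy mechanism. For `n, N ≥ 1`,
`ε > 0`, `Δ ≥ 0` and any input bag `b : Fin N → ℝ^n`, the product of the Laplacian
measures centered at the `b i` assigns to the set
`{v | min_τ Σ_i ‖b i − v (τ i)‖ ≤ N·Δ}` (i.e. the bags within Earth Mover's distance `Δ`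
of `b`) probability at least
`1 − exp(−εNΔ) · e_{n−1}(εNΔ) · Σ_{k=0}^{N−1} ((εNΔ)^n/n!)^k`. -/
theorem earth_mover_utility_bound (n N : ℕ) (hn : 1 ≤ n) (hN : 1 ≤ N)
    (ε : ℝ) (hε : 0 < ε) (Δ : ℝ) (hΔ : 0 ≤ Δ)
    (b : Fin N → EuclideanSpace ℝ (Fin n)) :
    ENNReal.ofReal
        (1 - Real.exp (-(ε * N * Δ)) *
            (∑ k ∈ Finset.range n, (ε * N * Δ) ^ k / (Nat.factorial k)) *
              ∑ k ∈ Finset.range N, ((ε * N * Δ) ^ n / (Nat.factorial n)) ^ k) ≤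
      Measure.pi (fun i => lapMeasure n ε (b i))
        {v : Fin N → EuclideanSpace ℝ (Fin n) |
          (⨅ τ : Equiv.Perm (Fin N), ∑ i, ‖b i - v (τ i)‖) ≤ N * Δ} :=
  earth_mover_utility_bound_general n N hn ε hε Δ hΔ b
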